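/- arXiv:2203.08628 — 2 statements merged into one kernel-verified Lean document; each statement's English description precedes it below -/
import Mathlib

section
/- Let G be a group with subgroups U, H, K such that G = UHK, H normalizes U, U ∩ H = {1}, and B ∩ K = (U ∩ K)(H ∩ K) where B = UH. Let χ : H → ℂˣ be a group homomorphism trivial on H ∩ K. If u₁h₁k₁ = u₂h₂k₂ with uᵢ ∈ U, hᵢ ∈ H, kᵢ ∈ K, then χ(h₁) = χ(h₂). Hence g ↦ χ(Iw_H(g)) is a well-defined function on G. -/
/-! Comparing the two decompositions shows that `k₂ k₁⁻¹ ∈ K` lies in `B = UH` with `H`-component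
`h₂⁻¹ h₁`. Since `U ∩ H = 1`, the factorisation in `B` is unique, so `B ∩ K = (U ∩ K)(H ∩ K)` forces
`h₂⁻¹ h₁ ∈ H ∩ K`, on which `χ` is trivial. -/

namespace Subgroup

variable {G : Type*} [Group G] {U H K : Subgroup G}

theorem right_mem_of_mul_mem (hUH : Disjoint U H)
    (hBK : ∀ g ∈ K, (∃ u ∈ U, ∃ h ∈ H, g = u * h) → ∃ u ∈ U ⊓ K, ∃ h ∈ H ⊓ K, g = u * h)
    {u h : G} (hu : u ∈ U) (hh : h ∈ H) (hK : u * h ∈ K) : h ∈ K := by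
  obtain ⟨u', hu', h', hh', heq⟩ := hBK _ hK ⟨u, hu, h, hh, rfl⟩
  have hpair : ((⟨u, hu⟩, ⟨h, hh⟩) : U × H) = (⟨u', hu'.1⟩, ⟨h', hh'.1⟩) :=
    mul_injective_of_disjoint hUH heq
  have hh_eq : h = h' := congrArg (fun p : U × H => (p.2 : G)) hpair
  exact hh_eq ▸ hh'.2

end Subgroup

theorem stmt_6_general {G : Type*} [Group G] (U H K : Subgroup G)
    (hnorm : ∀ h ∈ H, ∀ u ∈ U, h * u * h⁻¹ ∈ U)
    (hUH : U ⊓ H = ⊥)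
    (hBK : ∀ g ∈ K, (∃ u ∈ U, ∃ h ∈ H, g = u * h) →
      ∃ u ∈ U ⊓ K, ∃ h ∈ H ⊓ K, g = u * h)
    (χ : H →* ℂˣ)
    (hχ : ∀ h : H, (h : G) ∈ K → χ h = 1) :
    ∀ (u₁ u₂ : G) (h₁ h₂ : H) (k₁ k₂ : G), u₁ ∈ U → u₂ ∈ U → k₁ ∈ K → k₂ ∈ K →
      u₁ * (h₁ : G) * k₁ = u₂ * (h₂ : G) * k₂ → χ h₁ = χ h₂ := by
  intro u₁ u₂ h₁ h₂ k₁ k₂ hu₁ hu₂ hk₁ hk₂ heq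
  have hk₂_eq : k₂ = (u₂ * h₂)⁻¹ * (u₁ * h₁ * k₁) := by rw [heq]; group
  have hdecomp : k₂ * k₁⁻¹ = ((h₂ : G)⁻¹ * (u₂⁻¹ * u₁) * h₂) * ((h₂⁻¹ * h₁ : H) : G) := by
    rw [hk₂_eq]; push_cast; group
  have hconj : (h₂ : G)⁻¹ * (u₂⁻¹ * u₁) * h₂ ∈ U := by
    simpa using hnorm _ (H.inv_mem h₂.2) _ (U.mul_mem (U.inv_mem hu₂) hu₁)
  have hK : ((h₂⁻¹ * h₁ : H) : G) ∈ K :=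
    Subgroup.right_mem_of_mul_mem (disjoint_iff.mpr hUH) hBK hconj (h₂⁻¹ * h₁).2
      (hdecomp ▸ K.mul_mem hk₂ (K.inv_mem hk₁))
  have hχ_triv := hχ _ hK
  rw [map_mul, map_inv, inv_mul_eq_one] at hχ_triv
  exact hχ_triv.symm

theorem stmt_6 {G : Type*} [Group G] (U H K : Subgroup G)
    (hIwasawa : ∀ g : G, ∃ u ∈ U, ∃ h ∈ H, ∃ k ∈ K, g = u * h * k)
    (hnorm : ∀ h ∈ H, ∀ u ∈ U, h * u * h⁻¹ ∈ U)
    (hUH : U ⊓ H = ⊥)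
    (hBK : ∀ g ∈ K, (∃ u ∈ U, ∃ h ∈ H, g = u * h) →
      ∃ u ∈ U ⊓ K, ∃ h ∈ H ⊓ K, g = u * h)
    (χ : H →* ℂˣ)
    (hχ : ∀ h : H, (h : G) ∈ K → χ h = 1) :
    ∀ (u₁ u₂ : G) (h₁ h₂ : H) (k₁ k₂ : G), u₁ ∈ U → u₂ ∈ U → k₁ ∈ K → k₂ ∈ K →
      u₁ * (h₁ : G) * k₁ = u₂ * (h₂ : G) * k₂ → χ h₁ = χ h₂ :=
  stmt_6_general U H K hnorm hUH hBK χ hχ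
end

section
/- Let V be a module over a commutative ring graded by an additive monoid of weights, and let h be a diagonalizable operator acting on the weight space V_μ by a scalar χ(μ). Let u be an operator such that u(V_μ) ⊆ ⊕_{ν ⪰ μ} V_ν (upper triangular with respect to the partial order ⪰). If χ(μ)/χ(ν) lies in a subring R whenever ν ⪰ μ, then the conjugate h⁻¹ u h maps V_μ into ⊕_{ν ⪰ μ} R · (components of u V_μ); in particular, if u preserves an R-lattice L = ⊕_μ L_μ and χ(μ − ν as ratio) ∈ R for ν ⪰ μ, then h⁻¹ u h also preserves L. -/
theorem stmt_9_general {𝕜 : Type*} [Field 𝕜] (R : Subring 𝕜)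
    {ι : Type*} [PartialOrder ι]
    (u : ι → ι → 𝕜) (htri : ∀ ν μ : ι, u ν μ ≠ 0 → μ ≤ ν)
    (hu : ∀ ν μ : ι, u ν μ ∈ R)
    (χ : ι → 𝕜)
    (hratio : ∀ μ ν : ι, μ ≤ ν → χ μ / χ ν ∈ R) :
    ∀ ν μ : ι, (χ ν)⁻¹ * u ν μ * χ μ ∈ R := by
  intro ν μ
  by_cases hzero : u ν μ = 0
  · simp [hzero]
  · rw [show (χ ν)⁻¹ * u ν μ * χ μ = u ν μ * (χ μ / χ ν) by ring]
    exact mul_mem (hu ν μ) (hratio μ ν (htri ν μ hzero))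

/-- Conjugation of a `⪰`-upper-triangular operator `u` (viewed as a matrix in
weight coordinates) by the diagonalizable operator `h` acting on the weight
space `V_μ` by the scalar `χ μ` multiplies the `(ν, μ)` block by `χ μ / χ ν`;
if the entries of `u` lie in a subring `R` (i.e. `u` preserves an `R`-lattice)
and `χ μ / χ ν ∈ R` whenever `ν ⪰ μ`, then all entries of `h⁻¹ u h` lie in `R`
(i.e. `h⁻¹ u h` also preserves the lattice). -/
theorem stmt_9 {𝕜 : Type*} [Field 𝕜] (R : Subring 𝕜)
    {ι : Type*} [PartialOrder ι]
    (u : ι → ι → 𝕜) (htri : ∀ ν μ : ι, u ν μ ≠ 0 → μ ≤ ν)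
    (hu : ∀ ν μ : ι, u ν μ ∈ R)
    (χ : ι → 𝕜) (hχ : ∀ μ, χ μ ≠ 0)
    (hratio : ∀ μ ν : ι, μ ≤ ν → χ μ / χ ν ∈ R) :
    ∀ ν μ : ι, (χ ν)⁻¹ * u ν μ * χ μ ∈ R :=
  stmt_9_general R u htri hu χ hratio
end
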